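/- arXiv:2506.22603 — 6 statements merged into one kernel-verified Lean document; each statement's English description precedes it below -/
import Mathlib

section
/- For the Fischer-Burmeister smoothing function φ_ε(a,b) = a + b − √(a² + b² + ε²) with ε > 0, one has φ_ε(a,b) = 0 if and only if a > 0, b > 0, and ab = ε²/2. -/
/-- For the Fischer–Burmeister smoothing function `φ_ε(a,b) = a + b − √(a² + b² + ε²)`
with `ε > 0`, one has `φ_ε(a,b) = 0` iff `a > 0`, `b > 0` and `a*b = ε²/2`. -/
theorem fb_smoothing_zero_iff (ε : ℝ) (hε : 0 < ε) (a b : ℝ) :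
    a + b - Real.sqrt (a ^ 2 + b ^ 2 + ε ^ 2) = 0 ↔
      0 < a ∧ 0 < b ∧ a * b = ε ^ 2 / 2 := by
  constructor
  · intro h
    have heq : a + b = Real.sqrt (a ^ 2 + b ^ 2 + ε ^ 2) := by linarith
    have hnn : 0 ≤ a ^ 2 + b ^ 2 + ε ^ 2 := by positivity
    have hsq : (a + b) ^ 2 = a ^ 2 + b ^ 2 + ε ^ 2 := by
      rw [heq, Real.sq_sqrt hnn]
    have hab : a * b = ε ^ 2 / 2 := by nlinarith
    have hpos : 0 < a + b := by
      rw [heq]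
      exact Real.sqrt_pos.mpr (by positivity)
    have habpos : 0 < a * b := by rw [hab]; positivity
    have ha : 0 < a := by nlinarith
    exact ⟨ha, by nlinarith, hab⟩
  · rintro ⟨ha, hb, hab⟩
    have hsq : a ^ 2 + b ^ 2 + ε ^ 2 = (a + b) ^ 2 := by nlinarith
    rw [hsq, Real.sqrt_sq (by linarith)]
    ring
end

section
/- Suppose W₁, W₂ are diagonal matrices in ℝ^{n×n} with all diagonal entries strictly positive, and M ∈ ℝ^{n×n} is symmetric positive semidefinite. Then the matrix W₁ + W₂ M is nonsingular; that is, if ρ ∈ ℝⁿ satisfies ρᵀ(W₁ + W₂ M) = 0, then ρ = 0. -/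
open Matrix

/-- If `W₁, W₂` are diagonal matrices with strictly positive diagonal entries and
`M` is symmetric positive semidefinite, then `W₁ + W₂ * M` is nonsingular; more
precisely, if `ρᵀ (W₁ + W₂ M) = 0` then `ρ = 0`. -/
theorem diag_plus_diag_mul_psd_nonsingular {n : ℕ}
    (w₁ w₂ : Fin n → ℝ) (hw₁ : ∀ i, 0 < w₁ i) (hw₂ : ∀ i, 0 < w₂ i)
    (M : Matrix (Fin n) (Fin n) ℝ) (hM : M.PosSemidef)
    (ρ : Fin n → ℝ)
    (hρ : ρ ᵥ* (Matrix.diagonal w₁ + Matrix.diagonal w₂ * M) = 0) :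
    ρ = 0 := by
  set σ : Fin n → ℝ := fun i => ρ i * w₂ i with hσ
  have h0 : (ρ ᵥ* (Matrix.diagonal w₁ + Matrix.diagonal w₂ * M)) ⬝ᵥ σ = 0 := by
    rw [hρ, zero_dotProduct]
  rw [Matrix.vecMul_add, add_dotProduct, ← Matrix.vecMul_vecMul] at h0
  have hσeq : ρ ᵥ* Matrix.diagonal w₂ = σ := by
    funext i; simp [Matrix.vecMul_diagonal, hσ]
  rw [hσeq, ← Matrix.dotProduct_mulVec] at h0
  have h2 : 0 ≤ σ ⬝ᵥ M *ᵥ σ := by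
    have := hM.dotProduct_mulVec_nonneg σ
    simpa using this
  rw [Matrix.dotProduct_mulVec] at h2
  have h1 : ρ ⬝ᵥ Matrix.diagonal w₁ *ᵥ σ = ∑ i, (w₁ i * w₂ i) * (ρ i)^2 := by
    simp only [dotProduct, Matrix.mulVec_diagonal, hσ]
    apply Finset.sum_congr rfl
    intros; ring
  rw [h1] at h0
  have hsum0 : ∑ i, (w₁ i * w₂ i) * (ρ i)^2 = 0 := by
    have hnn : 0 ≤ ∑ i, (w₁ i * w₂ i) * (ρ i)^2 :=
      Finset.sum_nonneg fun i _ => mul_nonneg (mul_nonneg (hw₁ i).le (hw₂ i).le) (sq_nonneg _)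
    linarith
  funext i
  have := (Finset.sum_eq_zero_iff_of_nonneg
    (fun i _ => mul_nonneg (mul_nonneg (hw₁ i).le (hw₂ i).le) (sq_nonneg (ρ i)))).mp hsum0 i
    (Finset.mem_univ i)
  have hpos : 0 < w₁ i * w₂ i := mul_pos (hw₁ i) (hw₂ i)
  have : (ρ i)^2 = 0 := by
    rcases mul_eq_zero.mp this with h | h
    · exact absurd h hpos.ne'
    · exact h
  simpa using pow_eq_zero_iff (n := 2) (by norm_num) |>.mp this
end

section
/- Let D₁, D₂, E₁, E₂ be diagonal n×n matrices with diagonal entries in (0,1). If ρ₁, ρ₂ ∈ ℝⁿ satisfy ρ₁ᵀ D₁ − ρ₂ᵀ E₂ = 0 and ρ₁ᵀ E₁ + ρ₂ᵀ D₂ = 0, then ρ₁ = 0 and ρ₂ = 0. -/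
open Matrix

/-- If `D₁, D₂, E₁, E₂` are diagonal matrices with diagonal entries in `(0,1)` and
`ρ₁ᵀ D₁ − ρ₂ᵀ E₂ = 0`, `ρ₁ᵀ E₁ + ρ₂ᵀ D₂ = 0`, then `ρ₁ = 0` and `ρ₂ = 0`. -/
theorem diag_system_only_trivial_solution {n : ℕ}
    (d₁ d₂ e₁ e₂ : Fin n → ℝ)
    (hd₁ : ∀ i, d₁ i ∈ Set.Ioo (0 : ℝ) 1) (hd₂ : ∀ i, d₂ i ∈ Set.Ioo (0 : ℝ) 1)
    (he₁ : ∀ i, e₁ i ∈ Set.Ioo (0 : ℝ) 1) (he₂ : ∀ i, e₂ i ∈ Set.Ioo (0 : ℝ) 1)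
    (ρ₁ ρ₂ : Fin n → ℝ)
    (h1 : ρ₁ ᵥ* Matrix.diagonal d₁ - ρ₂ ᵥ* Matrix.diagonal e₂ = 0)
    (h2 : ρ₁ ᵥ* Matrix.diagonal e₁ + ρ₂ ᵥ* Matrix.diagonal d₂ = 0) :
    ρ₁ = 0 ∧ ρ₂ = 0 := by
  have key : ∀ i, ρ₁ i = 0 ∧ ρ₂ i = 0 := by
    intro i
    have e1 : ρ₁ i * d₁ i - ρ₂ i * e₂ i = 0 := by
      have := congrFun h1 i
      simpa [Matrix.vecMul_diagonal] using this
    have e2 : ρ₁ i * e₁ i + ρ₂ i * d₂ i = 0 := by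
      have := congrFun h2 i
      simpa [Matrix.vecMul_diagonal] using this
    have hdet : d₁ i * d₂ i + e₁ i * e₂ i > 0 := by
      have := (hd₁ i).1; have := (hd₂ i).1; have := (he₁ i).1; have := (he₂ i).1
      positivity
    constructor
    · have : ρ₁ i * (d₁ i * d₂ i + e₁ i * e₂ i) = 0 := by linear_combination d₂ i * e1 + e₂ i * e2
      exact by
        rcases mul_eq_zero.mp this with h | h
        · exact h
        · exact absurd h (ne_of_gt hdet)
    · have : ρ₂ i * (d₁ i * d₂ i + e₁ i * e₂ i) = 0 := by linear_combination d₁ i * e2 - e₁ i * e1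
      exact by
        rcases mul_eq_zero.mp this with h | h
        · exact h
        · exact absurd h (ne_of_gt hdet)
  exact ⟨funext fun i => (key i).1, funext fun i => (key i).2⟩
end

section
/- Let G, H : ℝ^{m+1} → ℝ^m be affine maps given by G(v) = L^G v and H(v) = L^H v + b^H where L^G, L^H have the block structure arising from the L1-SVC MPEC (with blocks given by identity matrices, ABᵀ, BBᵀ, and the all-ones column). Then for any ε > 0 and any v ∈ ℝ^{m+1}, the Jacobian J_v Φ_ε(G(v), H(v)) = W^G L^G + W^H L^H has full row rank m, where W^G, W^H are the diagonal matrices of FB weights; hence LICQ holds at every feasible point of the smoothed problem NLP_ε. -/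
open Matrix

/-- Row index type of the L1-SVC MPEC constraint system: four blocks
(`ζ`/`z` blocks of size `k = T·m₁`, `α`/`ξ` blocks of size `l = T·m₂`). -/
abbrev SVCRow (k l : ℕ) := (Fin k ⊕ Fin k) ⊕ (Fin l ⊕ Fin l)

/-- Column index type: variable `v = (C, ζ, z, α, ξ) ∈ ℝ^{m+1}`. -/
abbrev SVCCol (k l : ℕ) := Unit ⊕ SVCRow k l

/-- `L^G = [0 | I]`, so that `G(v) = (ζ, z, α, ξ)`. -/
def LG (k l : ℕ) : Matrix (SVCRow k l) (SVCCol k l) ℝ :=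
  fun i j => match j with
  | Sum.inl _ => 0
  | Sum.inr j' => if i = j' then 1 else 0

/-- `L^H` with block structure `[0 0 I ABᵀ 0; 0 −I 0 0 0; 0 0 0 BBᵀ I; 𝟏 0 0 −I 0]`. -/
def LH {k l nn : ℕ} (A : Matrix (Fin k) (Fin nn) ℝ) (B : Matrix (Fin l) (Fin nn) ℝ) :
    Matrix (SVCRow k l) (SVCCol k l) ℝ :=
  fun i j => match i, j with
  | Sum.inl (Sum.inl i), Sum.inr (Sum.inl (Sum.inr j)) => if i = j then 1 else 0
  | Sum.inl (Sum.inl i), Sum.inr (Sum.inr (Sum.inl j)) => (A * Bᵀ) i j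
  | Sum.inl (Sum.inr i), Sum.inr (Sum.inl (Sum.inl j)) => if i = j then -1 else 0
  | Sum.inr (Sum.inl i), Sum.inr (Sum.inr (Sum.inl j)) => (B * Bᵀ) i j
  | Sum.inr (Sum.inl i), Sum.inr (Sum.inr (Sum.inr j)) => if i = j then 1 else 0
  | Sum.inr (Sum.inr _), Sum.inl _ => 1
  | Sum.inr (Sum.inr i), Sum.inr (Sum.inr (Sum.inl j)) => if i = j then -1 else 0
  | _, _ => 0

/-- The constant vector `b^H = (0, 𝟏, −𝟏, 0)`. -/
def bH (k l : ℕ) : SVCRow k l → ℝ :=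
  fun i => match i with
  | Sum.inl (Sum.inl _) => 0
  | Sum.inl (Sum.inr _) => 1
  | Sum.inr (Sum.inl _) => -1
  | Sum.inr (Sum.inr _) => 0


lemma aux_pos (a b ε : ℝ) (hε : 0 < ε) : 0 < 1 - a / Real.sqrt (a^2 + b^2 + ε^2) := by
  have h1 : |a| < Real.sqrt (a^2 + b^2 + ε^2) := by
    rw [← Real.sqrt_sq_eq_abs]
    apply Real.sqrt_lt_sqrt (sq_nonneg a)
    nlinarith [sq_nonneg b]
  have hs : 0 < Real.sqrt (a^2 + b^2 + ε^2) := lt_of_le_of_lt (abs_nonneg a) h1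
  rw [sub_pos, div_lt_one hs]
  exact lt_of_le_of_lt (le_abs_self a) h1

lemma aux_pos' (a b ε : ℝ) (hε : 0 < ε) : 0 < 1 - b / Real.sqrt (a^2 + b^2 + ε^2) := by
  have h : a^2 + b^2 + ε^2 = b^2 + a^2 + ε^2 := by ring
  rw [h]
  exact aux_pos b a ε hε

lemma quad_form (l nn : ℕ) (B : Matrix (Fin l) (Fin nn) ℝ) (y : Fin l → ℝ) :
    ∑ j, ∑ i, y j * (y i * (B * Bᵀ) i j) = ∑ n, (∑ i, y i * B i n)^2 := by
  calc ∑ j, ∑ i, y j * (y i * (B * Bᵀ) i j)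
      = ∑ j, ∑ i, ∑ n, (y j * B j n) * (y i * B i n) := by
        refine Finset.sum_congr rfl fun j _ => Finset.sum_congr rfl fun i _ => ?_
        simp only [Matrix.mul_apply, Matrix.transpose_apply, Finset.mul_sum]
        exact Finset.sum_congr rfl fun n _ => by ring
    _ = ∑ j, ∑ n, ∑ i, (y j * B j n) * (y i * B i n) :=
        Finset.sum_congr rfl fun j _ => Finset.sum_comm
    _ = ∑ n, ∑ j, ∑ i, (y j * B j n) * (y i * B i n) := Finset.sum_comm
    _ = ∑ n, (∑ i, y i * B i n)^2 := by
        refine Finset.sum_congr rfl fun n _ => ?_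
        rw [sq, Finset.sum_mul_sum]

lemma third_block {l nn : ℕ} (B : Matrix (Fin l) (Fin nn) ℝ)
    (w3G w3H w4G w4H x3 x4 : Fin l → ℝ)
    (h3G : ∀ j, 0 < w3G j) (h3H : ∀ j, 0 < w3H j)
    (h4G : ∀ j, 0 < w4G j) (h4H : ∀ j, 0 < w4H j)
    (hξ : ∀ j, w3H j * x3 j + w4G j * x4 j = 0)
    (hα : ∀ j, x3 j * w3G j + (∑ i, x3 i * ((B * Bᵀ) i j * w3H i)) +
      -(w4H j * x4 j) = 0) :
    ∀ j, x3 j = 0 := by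
  have hx4 : ∀ j, x4 j = -(w3H j * x3 j) / w4G j := by
    intro j
    have hw : w4G j ≠ 0 := (h4G j).ne'
    field_simp
    linear_combination hξ j
  have hbr : ∀ j, x3 j * w3G j + (∑ i, x3 i * ((B * Bᵀ) i j * w3H i)) +
      w4H j * w3H j / w4G j * x3 j = 0 := by
    intro j
    linear_combination hα j + w4H j * hx4 j
  have hS : ∑ j, (w3H j * x3 j) *
      (x3 j * w3G j + (∑ i, x3 i * ((B * Bᵀ) i j * w3H i)) +
        w4H j * w3H j / w4G j * x3 j) = 0 :=
    Finset.sum_eq_zero fun j _ => by rw [hbr j, mul_zero]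
  have hexp : ∑ j, (w3H j * x3 j) *
      (x3 j * w3G j + (∑ i, x3 i * ((B * Bᵀ) i j * w3H i)) +
        w4H j * w3H j / w4G j * x3 j)
      = (∑ j, w3G j * w3H j * x3 j ^ 2)
        + (∑ n, (∑ i, (w3H i * x3 i) * B i n)^2)
        + (∑ j, w4H j * w3H j / w4G j * w3H j * x3 j ^ 2) := by
    rw [← quad_form l nn B (fun i => w3H i * x3 i)]
    simp only [mul_add, Finset.sum_add_distrib, Finset.mul_sum]
    congr 1
    · congr 1
      · exact Finset.sum_congr rfl fun j _ => by ring
      · exact Finset.sum_congr rfl fun j _ => Finset.sum_congr rfl fun i _ => by ring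
    · exact Finset.sum_congr rfl fun j _ => by ring
  rw [hexp] at hS
  have hT2 : 0 ≤ ∑ n, (∑ i, (w3H i * x3 i) * B i n)^2 :=
    Finset.sum_nonneg fun n _ => sq_nonneg _
  have key3 : ∀ j, (0:ℝ) ≤ w4H j * w3H j / w4G j * w3H j * x3 j ^ 2 := fun j =>
    mul_nonneg (mul_nonneg (div_pos (mul_pos (h4H j) (h3H j)) (h4G j)).le (h3H j).le)
      (sq_nonneg _)
  have hT3 : 0 ≤ ∑ j, w4H j * w3H j / w4G j * w3H j * x3 j ^ 2 :=
    Finset.sum_nonneg fun j _ => key3 j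
  have key1 : ∀ j ∈ Finset.univ, (0:ℝ) ≤ w3G j * w3H j * x3 j ^ 2 := fun j _ =>
    mul_nonneg (mul_pos (h3G j) (h3H j)).le (sq_nonneg _)
  have hT1' : ∑ j, w3G j * w3H j * x3 j ^ 2 = 0 :=
    le_antisymm (by linarith) (Finset.sum_nonneg key1)
  intro j
  have hall := (Finset.sum_eq_zero_iff_of_nonneg key1).mp hT1' j (Finset.mem_univ j)
  have hw : (0:ℝ) < w3G j * w3H j := mul_pos (h3G j) (h3H j)
  have hsq : x3 j ^ 2 = 0 := (mul_eq_zero.mp hall).resolve_left hw.ne'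
  exact pow_eq_zero_iff (two_ne_zero) |>.mp hsq

lemma key_rank {k l nn : ℕ} (A : Matrix (Fin k) (Fin nn) ℝ) (B : Matrix (Fin l) (Fin nn) ℝ)
    (wG wH : SVCRow k l → ℝ) (hG : ∀ i, 0 < wG i) (hH : ∀ i, 0 < wH i) :
    (Matrix.diagonal wG * LG k l + Matrix.diagonal wH * LH A B).rank =
      Fintype.card (SVCRow k l) := by
  set M := Matrix.diagonal wG * LG k l + Matrix.diagonal wH * LH A B with hM
  have hinj : Function.Injective Mᵀ.mulVecLin := by
    rw [← LinearMap.ker_eq_bot, LinearMap.ker_eq_bot']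
    intro x hx0
    have hx : x ᵥ* M = 0 := by
      funext c
      have := congrFun hx0 c
      simpa [Matrix.mulVecLin_apply, Matrix.mulVec_transpose] using this
    have hζ : ∀ i : Fin k, wG (Sum.inl (Sum.inl i)) * x (Sum.inl (Sum.inl i)) +
        -(wH (Sum.inl (Sum.inr i)) * x (Sum.inl (Sum.inr i))) = 0 := by
      intro i
      have h := congrFun hx (Sum.inr (Sum.inl (Sum.inl i)))
      simpa [vecMul, dotProduct, Fintype.sum_sum_type, LG, LH, Matrix.add_apply,
        Matrix.diagonal_mul, mul_ite, ite_mul, mul_comm, hM] using h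
    have hz : ∀ i : Fin k, wH (Sum.inl (Sum.inl i)) * x (Sum.inl (Sum.inl i)) +
        wG (Sum.inl (Sum.inr i)) * x (Sum.inl (Sum.inr i)) = 0 := by
      intro i
      have h := congrFun hx (Sum.inr (Sum.inl (Sum.inr i)))
      simpa [vecMul, dotProduct, Fintype.sum_sum_type, LG, LH, Matrix.add_apply,
        Matrix.diagonal_mul, mul_ite, ite_mul, mul_comm, hM] using h
    have hx1 : ∀ i : Fin k, x (Sum.inl (Sum.inl i)) = 0 := by
      intro i
      have hcomb : (wG (Sum.inl (Sum.inl i)) * wG (Sum.inl (Sum.inr i)) +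
          wH (Sum.inl (Sum.inr i)) * wH (Sum.inl (Sum.inl i))) * x (Sum.inl (Sum.inl i)) = 0 := by
        linear_combination wG (Sum.inl (Sum.inr i)) * hζ i + wH (Sum.inl (Sum.inr i)) * hz i
      have hpos : 0 < wG (Sum.inl (Sum.inl i)) * wG (Sum.inl (Sum.inr i)) +
          wH (Sum.inl (Sum.inr i)) * wH (Sum.inl (Sum.inl i)) := by
        have h1 := hG (Sum.inl (Sum.inl i)); have h2 := hG (Sum.inl (Sum.inr i))
        have h3 := hH (Sum.inl (Sum.inl i)); have h4 := hH (Sum.inl (Sum.inr i))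
        nlinarith
      exact (mul_eq_zero.mp hcomb).resolve_left (ne_of_gt hpos)
    have hx2 : ∀ i : Fin k, x (Sum.inl (Sum.inr i)) = 0 := by
      intro i
      have h := hz i
      rw [hx1 i] at h
      have h' : wG (Sum.inl (Sum.inr i)) * x (Sum.inl (Sum.inr i)) = 0 := by linarith
      exact (mul_eq_zero.mp h').resolve_left (ne_of_gt (hG _))
    have hξ : ∀ j : Fin l, wH (Sum.inr (Sum.inl j)) * x (Sum.inr (Sum.inl j)) +
        wG (Sum.inr (Sum.inr j)) * x (Sum.inr (Sum.inr j)) = 0 := by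
      intro j
      have h := congrFun hx (Sum.inr (Sum.inr (Sum.inr j)))
      simpa [vecMul, dotProduct, Fintype.sum_sum_type, LG, LH, Matrix.add_apply,
        Matrix.diagonal_mul, mul_ite, ite_mul, mul_comm, hM] using h
    have hα : ∀ j : Fin l,
        x (Sum.inr (Sum.inl j)) * wG (Sum.inr (Sum.inl j)) +
        (∑ i, x (Sum.inr (Sum.inl i)) * ((B * Bᵀ) i j * wH (Sum.inr (Sum.inl i)))) +
        -(wH (Sum.inr (Sum.inr j)) * x (Sum.inr (Sum.inr j))) = 0 := by
      intro j
      have h := congrFun hx (Sum.inr (Sum.inr (Sum.inl j)))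
      simp only [vecMul, dotProduct, Fintype.sum_sum_type, LG, LH, Matrix.add_apply,
        Matrix.diagonal_mul, mul_ite, ite_mul, mul_zero, zero_mul, mul_one, add_zero,
        zero_add, Pi.zero_apply, hx1, mul_comm, Sum.inr.injEq, Sum.inl.injEq, reduceCtorEq,
        if_false, Finset.sum_const_zero, mul_neg, neg_mul, one_mul, mul_add,
        Finset.sum_add_distrib, Finset.sum_ite_eq', Finset.mem_univ, if_true, hM] at h
      linarith [h]
    have hx3 : ∀ j : Fin l, x (Sum.inr (Sum.inl j)) = 0 :=
      third_block B (fun j => wG (Sum.inr (Sum.inl j))) (fun j => wH (Sum.inr (Sum.inl j)))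
        (fun j => wG (Sum.inr (Sum.inr j))) (fun j => wH (Sum.inr (Sum.inr j)))
        (fun j => x (Sum.inr (Sum.inl j))) (fun j => x (Sum.inr (Sum.inr j)))
        (fun j => hG _) (fun j => hH _) (fun j => hG _) (fun j => hH _) hξ hα
    have hx4 : ∀ j : Fin l, x (Sum.inr (Sum.inr j)) = 0 := by
      intro j
      have h := hξ j
      rw [hx3 j] at h
      have h' : wG (Sum.inr (Sum.inr j)) * x (Sum.inr (Sum.inr j)) = 0 := by linarith
      exact (mul_eq_zero.mp h').resolve_left (ne_of_gt (hG _))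
    funext r
    rcases r with (i | i) | (j | j)
    · exact hx1 i
    · exact hx2 i
    · exact hx3 j
    · exact hx4 j
  rw [← Matrix.rank_transpose M, Matrix.rank, LinearMap.finrank_range_of_inj hinj,
    Module.finrank_fintype_fun_eq_card]

/-- For every `ε > 0` and every `v`, the Jacobian `W^G L^G + W^H L^H` of the smoothed
complementarity system `Φ_ε(G(v), H(v))` (with FB weight matrices `W^G`, `W^H`)
has full row rank; hence LICQ holds at every feasible point of (NLP_ε). -/
theorem smoothedJacobian_full_row_rank {k l nn : ℕ}
    (A : Matrix (Fin k) (Fin nn) ℝ) (B : Matrix (Fin l) (Fin nn) ℝ)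
    (ε : ℝ) (hε : 0 < ε) (v : SVCCol k l → ℝ) :
    letI Gv : SVCRow k l → ℝ := (LG k l) *ᵥ v
    letI Hv : SVCRow k l → ℝ := (LH A B) *ᵥ v + bH k l
    letI wG : SVCRow k l → ℝ := fun i =>
      1 - Gv i / Real.sqrt ((Gv i) ^ 2 + (Hv i) ^ 2 + ε ^ 2)
    letI wH : SVCRow k l → ℝ := fun i =>
      1 - Hv i / Real.sqrt ((Gv i) ^ 2 + (Hv i) ^ 2 + ε ^ 2)
    (Matrix.diagonal wG * LG k l + Matrix.diagonal wH * LH A B).rank =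
      Fintype.card (SVCRow k l) := by
  exact key_rank A B _ _
    (fun i => aux_pos ((LG k l *ᵥ v) i) ((LH A B *ᵥ v + bH k l) i) ε hε)
    (fun i => aux_pos' ((LG k l *ᵥ v) i) ((LH A B *ᵥ v + bH k l) i) ε hε)
end

section
/- Let v* be feasible for the MPEC min f(v) s.t. G(v) ≥ 0, H(v) ≥ 0, G(v)ᵀH(v) = 0 with f, G, H continuously differentiable, and let ε_t ↓ 0. Suppose v^t is a KKT point of the smoothed problem min f(v) s.t. Φ_{ε_t}(G(v), H(v)) = 0 at which LICQ holds for each t, and v^t → v* along a subsequence. If MPEC-LICQ holds at v*, then the sequence of Lagrange multipliers λ^{(t)} of the smoothed problems is bounded. -/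
/-!
If the multipliers were unbounded, pass to an ultrafilter along which `‖λ_t‖ → ∞` and divide
the stationarity equation by `‖λ_t‖`. On the feasible set the FB weights are nonnegative with
`w^G_i + w^H_i = 1`, so the rescaled weighted multipliers `λ_i w^G_i / ‖λ‖`, `λ_i w^H_i / ‖λ‖`
are bounded and converge; in the limit `∇f` drops out, leaving a vanishing combination of
gradients at `v*`. If `G_i(v*) ≠ 0`, then `G_i(v*) > 0 = H_i(v*)` and `w^G_i → 0`, so only the
gradients of MPEC-LICQ occur and all limit coefficients vanish. But they add up to the limit of
`λ / ‖λ‖`, which has norm one.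
-/

open Filter

/-- The FB weight `1 − a/√(a² + b² + ε²)`. -/
noncomputable def fbWeight (ε a b : ℝ) : ℝ := 1 - a / Real.sqrt (a ^ 2 + b ^ 2 + ε ^ 2)

open Topology

lemma abs_le_sqrt_sq_add_sq_add_sq (a b c : ℝ) : |a| ≤ √(a ^ 2 + b ^ 2 + c ^ 2) := by
  rw [← Real.sqrt_sq_eq_abs]
  exact Real.sqrt_le_sqrt (by linarith [sq_nonneg b, sq_nonneg c])

lemma fbWeight_nonneg (ε a b : ℝ) : 0 ≤ fbWeight ε a b := by
  rw [fbWeight, sub_nonneg]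
  exact div_le_one_of_le₀ ((le_abs_self a).trans (abs_le_sqrt_sq_add_sq_add_sq a b ε))
    (Real.sqrt_nonneg _)

lemma fbWeight_add_fbWeight_swap {ε a b : ℝ} (hε : ε ≠ 0)
    (h : a + b - √(a ^ 2 + b ^ 2 + ε ^ 2) = 0) : fbWeight ε a b + fbWeight ε b a = 1 := by
  have hs : √(a ^ 2 + b ^ 2 + ε ^ 2) ≠ 0 := (Real.sqrt_pos.2 (by positivity)).ne'
  rw [fbWeight, fbWeight, add_comm (b ^ 2)]
  field_simp
  linarith

lemma add_eq_sqrt_sq_add_sq_iff {a b : ℝ} :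
    a + b = √(a ^ 2 + b ^ 2) ↔ 0 ≤ a ∧ 0 ≤ b ∧ a * b = 0 := by
  constructor
  · intro h
    have hsum : 0 ≤ a + b := h ▸ Real.sqrt_nonneg _
    have hab : a * b = 0 := by
      have := congrArg (· ^ 2) h
      simp only [Real.sq_sqrt (by positivity : (0:ℝ) ≤ a ^ 2 + b ^ 2)] at this
      linarith
    rcases mul_eq_zero.1 hab with ha | hb
    · exact ⟨ha.ge, by linarith, hab⟩
    · exact ⟨by linarith, hb.ge, hab⟩
  · rintro ⟨ha, hb, hab⟩
    rcases mul_eq_zero.1 hab with rfl | rfl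
    · simp [Real.sqrt_sq hb]
    · simp [Real.sqrt_sq ha]

lemma Filter.Tendsto.fbWeight {α : Type*} {l : Filter α} {e a b : α → ℝ} {E A B : ℝ}
    (he : Tendsto e l (𝓝 E)) (ha : Tendsto a l (𝓝 A)) (hb : Tendsto b l (𝓝 B))
    (h : A ^ 2 + B ^ 2 + E ^ 2 ≠ 0) :
    Tendsto (fun t => _root_.fbWeight (e t) (a t) (b t)) l (𝓝 (_root_.fbWeight E A B)) := by
  refine tendsto_const_nhds.sub (ha.div (Tendsto.sqrt ?_) ?_)
  · exact ((ha.pow 2).add (hb.pow 2)).add (he.pow 2)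
  · exact Real.sqrt_ne_zero'.2 (lt_of_le_of_ne (by positivity) h.symm)

lemma tendsto_fbWeight_zero_of_ne_zero {α : Type*} {l : Filter α} [l.NeBot] {e a b : α → ℝ}
    {A B : ℝ}
    (he : Tendsto e l (𝓝 0)) (ha : Tendsto a l (𝓝 A)) (hb : Tendsto b l (𝓝 B))
    (hfeas : ∀ t, a t + b t - √(a t ^ 2 + b t ^ 2 + e t ^ 2) = 0) (hA : A ≠ 0) :
    Tendsto (fun t => fbWeight (e t) (a t) (b t)) l (𝓝 0) := by
  have hlim : A + B - √(A ^ 2 + B ^ 2 + 0 ^ 2) = 0 :=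
    tendsto_nhds_unique ((ha.add hb).sub (((ha.pow 2).add (hb.pow 2)).add (he.pow 2)).sqrt)
      (by simp_rw [hfeas]; exact tendsto_const_nhds)
  obtain ⟨hA0, -, hAB⟩ := add_eq_sqrt_sq_add_sq_iff.1 (by simpa [sub_eq_zero] using hlim)
  obtain rfl : B = 0 := (mul_eq_zero.1 hAB).resolve_left hA
  have hApos : 0 < A := lt_of_le_of_ne hA0 (Ne.symm hA)
  convert he.fbWeight ha hb (by positivity) using 2
  simp [_root_.fbWeight, Real.sqrt_sq hApos.le, hA]

lemma eq_zero_of_linearIndependent_sumElim {R M ι : Type*} [Ring R] [AddCommGroup M] [Module R M]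
    [Fintype ι] {P Q : ι → Prop} {a b : ι → M}
    (hli : LinearIndependent R (Sum.elim (fun i : {i // P i} => a i) (fun i : {i // Q i} => b i)))
    {x y : ι → R} (hx : ∀ i, ¬P i → x i = 0) (hy : ∀ i, ¬Q i → y i = 0)
    (h : ∑ i, (x i • a i + y i • b i) = 0) : x = 0 ∧ y = 0 := by
  classical
  have hsub : ∀ (S : ι → Prop) [DecidablePred S] (z : ι → R) (e : ι → M), (∀ i, ¬S i → z i = 0) →
      ∑ i : {i // S i}, z i • e i = ∑ i, z i • e i := fun S _ z e hz => by
    rw [← Fintype.sum_subtype_add_sum_subtype S (fun i => z i • e i), left_eq_add]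
    exact Finset.sum_eq_zero fun i _ => by rw [hz i i.2, zero_smul]
  have hcoef := Fintype.linearIndependent_iff.1 hli (Sum.elim (fun i => x i) (fun i => y i)) (by
    rw [Fintype.sum_sum_type]
    simpa only [Sum.elim_inl, Sum.elim_inr, hsub P x a hx, hsub Q y b hy,
      ← Finset.sum_add_distrib] using h)
  constructor
  · funext i
    by_cases hi : P i
    exacts [hcoef (.inl ⟨i, hi⟩), hx i hi]
  · funext i
    by_cases hi : Q i
    exacts [hcoef (.inr ⟨i, hi⟩), hy i hi]

lemma Filter.neBot_inf_comap_atTop_of_not_isBoundedUnder {α β : Type*} [Nonempty β]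
    [LinearOrder β] {l : Filter α} {f : α → β} (hf : ¬IsBoundedUnder (· ≤ ·) l f) :
    (l ⊓ comap f atTop).NeBot := by
  refine inf_neBot_iff_frequently_right.2 fun {p} hp hnp => hf ?_
  obtain ⟨b, hb⟩ := eventually_atTop.1 (eventually_comap.1 hp)
  exact ⟨b, eventually_map.2 (hnp.mono fun t ht => le_of_not_ge fun hbt => ht (hb _ hbt t rfl))⟩

lemma Ultrafilter.exists_tendsto_of_isBounded {α X : Type*} [PseudoMetricSpace X] [ProperSpace X]
    (U : Ultrafilter α) {f : α → X} {s : Set X} (hs : Bornology.IsBounded s)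
    (hf : ∀ᶠ t in (U : Filter α), f t ∈ s) : ∃ x, Tendsto f U (𝓝 x) := by
  obtain ⟨x, -, hx⟩ := hs.isCompact_closure.ultrafilter_le_nhds (U.map f)
    (le_principal_iff.2 (mem_of_superset hf fun _ hx => subset_closure hx))
  exact ⟨x, hx⟩

section Multipliers

variable {α ι E : Type*} [Fintype ι] [NormedAddCommGroup E] [NormedSpace ℝ E] {l : Filter α}
  {P Q : ι → Prop} {lam p q : α → ι → ℝ} {c : α → E} {a b : α → ι → E} {a₀ b₀ : ι → E}

theorem tendsto_inv_norm_smul_multipliers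
    (hp : ∀ t i, 0 ≤ p t i) (hq : ∀ t i, 0 ≤ q t i) (hpq : ∀ t i, p t i + q t i = 1)
    (hpP : ∀ i, ¬P i → Tendsto (p · i) l (𝓝 0)) (hqQ : ∀ i, ¬Q i → Tendsto (q · i) l (𝓝 0))
    (ha : ∀ i, Tendsto (a · i) l (𝓝 (a₀ i))) (hb : ∀ i, Tendsto (b · i) l (𝓝 (b₀ i)))
    (hc : IsBoundedUnder (· ≤ ·) l (‖c ·‖))
    (hstat : ∀ t, c t = ∑ i, lam t i • (p t i • a t i + q t i • b t i))
    (hli : LinearIndependent ℝ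
      (Sum.elim (fun i : {i // P i} => a₀ i) (fun i : {i // Q i} => b₀ i)))
    (hlam : Tendsto (‖lam ·‖) l atTop) :
    Tendsto (fun t => ‖lam t‖⁻¹ • lam t) l (𝓝 0) := by
  set r : α → ℝ := fun t => ‖lam t‖⁻¹
  have hr_lam : ∀ t i, |r t * lam t i| ≤ 1 := fun t i => by
    rw [abs_mul, abs_inv, abs_norm, ← div_eq_inv_mul]
    exact div_le_one_of_le₀ (norm_le_pi_norm (lam t) i) (norm_nonneg _)
  set x : α → ι → ℝ := fun t i => r t * lam t i * p t i
  set y : α → ι → ℝ := fun t i => r t * lam t i * q t i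
  have hx_le : ∀ t i, |x t i| ≤ p t i := fun t i => by
    rw [abs_mul, abs_of_nonneg (hp t i)]
    exact mul_le_of_le_one_left (hp t i) (hr_lam t i)
  have hy_le : ∀ t i, |y t i| ≤ q t i := fun t i => by
    rw [abs_mul, abs_of_nonneg (hq t i)]
    exact mul_le_of_le_one_left (hq t i) (hr_lam t i)
  have hxy : ∀ t, x t + y t = r t • lam t := fun t => funext fun i => by
    simp only [Pi.add_apply, Pi.smul_apply, smul_eq_mul, x, y, ← mul_add, hpq, mul_one]
  have hscaled : ∀ t, r t • c t = ∑ i, (x t i • a t i + y t i • b t i) := fun t => by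
    simp only [hstat, Finset.smul_sum, smul_add, smul_smul, x, y, mul_assoc]
  refine tendsto_iff_ultrafilter _ _ _ |>.2 fun U hUl => ?_
  have hball : ∀ (z w : α → ι → ℝ), (∀ t i, |z t i| ≤ w t i) → (∀ t i, w t i ≤ 1) →
      ∃ z₀, Tendsto z U (𝓝 z₀) := fun z w hzw hw1 =>
    U.exists_tendsto_of_isBounded (Metric.isBounded_closedBall (x := 0) (r := 1))
      (Eventually.of_forall fun t => mem_closedBall_zero_iff.2 <|
        (pi_norm_le_iff_of_nonneg zero_le_one).2 fun i => (hzw t i).trans (hw1 t i))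
  obtain ⟨x₀, hx⟩ := hball x p hx_le fun t i => by linarith [hq t i, hpq t i]
  obtain ⟨y₀, hy⟩ := hball y q hy_le fun t i => by linarith [hp t i, hpq t i]
  have hx₀ : ∀ i, ¬P i → x₀ i = 0 := fun i hi =>
    tendsto_nhds_unique (tendsto_pi_nhds.1 hx i)
      (squeeze_zero_norm (hx_le · i) ((hpP i hi).mono_left hUl))
  have hy₀ : ∀ i, ¬Q i → y₀ i = 0 := fun i hi =>
    tendsto_nhds_unique (tendsto_pi_nhds.1 hy i)
      (squeeze_zero_norm (hy_le · i) ((hqQ i hi).mono_left hUl))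
  have hr : Tendsto r U (𝓝 0) := tendsto_inv_atTop_zero.comp (hlam.mono_left hUl)
  have hlim : ∑ i, (x₀ i • a₀ i + y₀ i • b₀ i) = 0 := by
    refine tendsto_nhds_unique ?_ ((hr.zero_smul_isBoundedUnder_le (hc.mono hUl)).congr hscaled)
    exact tendsto_finsetSum _ fun i _ =>
      ((tendsto_pi_nhds.1 hx i).smul ((ha i).mono_left hUl)).add
        ((tendsto_pi_nhds.1 hy i).smul ((hb i).mono_left hUl))
  obtain ⟨rfl, rfl⟩ := eq_zero_of_linearIndependent_sumElim hli hx₀ hy₀ hlim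
  simpa [hxy] using hx.add hy

theorem isBoundedUnder_norm_multipliers
    (hp : ∀ t i, 0 ≤ p t i) (hq : ∀ t i, 0 ≤ q t i) (hpq : ∀ t i, p t i + q t i = 1)
    (hpP : ∀ i, ¬P i → Tendsto (p · i) l (𝓝 0)) (hqQ : ∀ i, ¬Q i → Tendsto (q · i) l (𝓝 0))
    (ha : ∀ i, Tendsto (a · i) l (𝓝 (a₀ i))) (hb : ∀ i, Tendsto (b · i) l (𝓝 (b₀ i)))
    (hc : IsBoundedUnder (· ≤ ·) l (‖c ·‖))
    (hstat : ∀ t, c t = ∑ i, lam t i • (p t i • a t i + q t i • b t i))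
    (hli : LinearIndependent ℝ
      (Sum.elim (fun i : {i // P i} => a₀ i) (fun i : {i // Q i} => b₀ i))) :
    IsBoundedUnder (· ≤ ·) l (‖lam ·‖) := by
  by_contra hunb
  have := neBot_inf_comap_atTop_of_not_isBoundedUnder hunb
  set l' := l ⊓ comap (‖lam ·‖) atTop
  have hl' : l' ≤ l := inf_le_left
  have hlam : Tendsto (‖lam ·‖) l' atTop := tendsto_iff_comap.2 inf_le_right
  have hnormalized := tendsto_inv_norm_smul_multipliers hp hq hpq
    (fun i hi => (hpP i hi).mono_left hl') (fun i hi => (hqQ i hi).mono_left hl')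
    (fun i => (ha i).mono_left hl') (fun i => (hb i).mono_left hl') (hc.mono hl') hstat hli hlam
  have hnorm_one : ∀ᶠ t in l', ‖‖lam t‖⁻¹ • lam t‖ = 1 :=
    (hlam.eventually_gt_atTop 0).mono fun t ht => by
      rw [norm_smul, norm_inv, norm_norm, inv_mul_cancel₀ ht.ne']
  exact one_ne_zero <| tendsto_nhds_unique
    (tendsto_const_nhds.congr' (hnorm_one.mono fun _ h => h.symm)) (by simpa using hnormalized.norm)

end Multipliers

theorem smoothing_multipliers_bounded_general {n m : ℕ}
    (f : (Fin n → ℝ) → ℝ) (G H : (Fin n → ℝ) → Fin m → ℝ)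
    (hf : ContDiff ℝ 1 f)
    (hG : ∀ i, ContDiff ℝ 1 (fun x => G x i))
    (hH : ∀ i, ContDiff ℝ 1 (fun x => H x i))
    (ε : ℕ → ℝ) (hεpos : ∀ t, 0 < ε t)
    (hε0 : Tendsto ε atTop (nhds 0))
    (v : ℕ → Fin n → ℝ) (lam : ℕ → Fin m → ℝ)
    -- feasibility for (NLP_{ε_t})
    (hfeas : ∀ t i, G (v t) i + H (v t) i -
      Real.sqrt ((G (v t) i) ^ 2 + (H (v t) i) ^ 2 + (ε t) ^ 2) = 0)
    -- KKT stationarity of (NLP_{ε_t})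
    (hkkt : ∀ t, fderiv ℝ f (v t) =
      ∑ i : Fin m, lam t i •
        (fbWeight (ε t) (G (v t) i) (H (v t) i) • fderiv ℝ (fun x => G x i) (v t) +
         fbWeight (ε t) (H (v t) i) (G (v t) i) • fderiv ℝ (fun x => H x i) (v t)))
    (vstar : Fin n → ℝ)
    (hconv : Tendsto v atTop (nhds vstar))
    -- MPEC-LICQ at `v*`
    (hmpec : LinearIndependent ℝ (Sum.elim
      (fun i : {i : Fin m // G vstar i = 0} => fderiv ℝ (fun x => G x i.1) vstar)
      (fun i : {i : Fin m // H vstar i = 0} => fderiv ℝ (fun x => H x i.1) vstar))) :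
    ∃ Cb : ℝ, ∀ t i, |lam t i| ≤ Cb := by
  have hGv i : Tendsto (fun t => G (v t) i) atTop (𝓝 (G vstar i)) :=
    (hG i).continuous.continuousAt.tendsto.comp hconv
  have hHv i : Tendsto (fun t => H (v t) i) atTop (𝓝 (H vstar i)) :=
    (hH i).continuous.continuousAt.tendsto.comp hconv
  have hfeas_swap t i : H (v t) i + G (v t) i -
      √((H (v t) i) ^ 2 + (G (v t) i) ^ 2 + (ε t) ^ 2) = 0 := by
    rw [add_comm (H (v t) i), add_comm (H (v t) i ^ 2)]
    exact hfeas t i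
  have hbdd := isBoundedUnder_norm_multipliers (l := atTop)
    (fun t i => fbWeight_nonneg _ _ _) (fun t i => fbWeight_nonneg _ _ _)
    (fun t i => fbWeight_add_fbWeight_swap (hεpos t).ne' (hfeas t i))
    (fun i hi => tendsto_fbWeight_zero_of_ne_zero hε0 (hGv i) (hHv i) (hfeas · i) hi)
    (fun i hi => tendsto_fbWeight_zero_of_ne_zero hε0 (hHv i) (hGv i) (hfeas_swap · i) hi)
    (fun i => ((hG i).continuous_fderiv one_ne_zero).continuousAt.tendsto.comp hconv)
    (fun i => ((hH i).continuous_fderiv one_ne_zero).continuousAt.tendsto.comp hconv)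
    ((hf.continuous_fderiv one_ne_zero).continuousAt.tendsto.comp hconv).norm.isBoundedUnder_le
    hkkt hmpec
  obtain ⟨C, hC⟩ := hbdd.bddAbove_range
  exact ⟨C, fun t i => (norm_le_pi_norm (lam t) i).trans (hC ⟨t, rfl⟩)⟩

/-- Boundedness of the multipliers: if `v^t` are KKT points of the smoothed problems
(NLP_{ε_t}) at which LICQ holds, `ε_t ↓ 0`, `v^t → v*`, and MPEC-LICQ holds at `v*`,
then the sequence of Lagrange multipliers `λ^{(t)}` is bounded. -/
theorem smoothing_multipliers_bounded {n m : ℕ}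
    (f : (Fin n → ℝ) → ℝ) (G H : (Fin n → ℝ) → Fin m → ℝ)
    (hf : ContDiff ℝ 1 f)
    (hG : ∀ i, ContDiff ℝ 1 (fun x => G x i))
    (hH : ∀ i, ContDiff ℝ 1 (fun x => H x i))
    (ε : ℕ → ℝ) (hεpos : ∀ t, 0 < ε t) (hεanti : StrictAnti ε)
    (hε0 : Tendsto ε atTop (nhds 0))
    (v : ℕ → Fin n → ℝ) (lam : ℕ → Fin m → ℝ)
    -- feasibility for (NLP_{ε_t})
    (hfeas : ∀ t i, G (v t) i + H (v t) i -
      Real.sqrt ((G (v t) i) ^ 2 + (H (v t) i) ^ 2 + (ε t) ^ 2) = 0)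
    -- KKT stationarity of (NLP_{ε_t})
    (hkkt : ∀ t, fderiv ℝ f (v t) =
      ∑ i : Fin m, lam t i •
        (fbWeight (ε t) (G (v t) i) (H (v t) i) • fderiv ℝ (fun x => G x i) (v t) +
         fbWeight (ε t) (H (v t) i) (G (v t) i) • fderiv ℝ (fun x => H x i) (v t)))
    -- LICQ at each `v^t`: the constraint gradients of (NLP_{ε_t}) are independent
    (hlicq : ∀ t, LinearIndependent ℝ (fun i : Fin m =>
      fbWeight (ε t) (G (v t) i) (H (v t) i) • fderiv ℝ (fun x => G x i) (v t) +
      fbWeight (ε t) (H (v t) i) (G (v t) i) • fderiv ℝ (fun x => H x i) (v t)))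
    (vstar : Fin n → ℝ)
    (hconv : Tendsto v atTop (nhds vstar))
    -- MPEC-LICQ at `v*`
    (hmpec : LinearIndependent ℝ (Sum.elim
      (fun i : {i : Fin m // G vstar i = 0} => fderiv ℝ (fun x => G x i.1) vstar)
      (fun i : {i : Fin m // H vstar i = 0} => fderiv ℝ (fun x => H x i.1) vstar))) :
    ∃ Cb : ℝ, ∀ t i, |lam t i| ≤ Cb :=
  smoothing_multipliers_bounded_general f G H hf hG hH ε hεpos hε0 v lam hfeas hkkt vstar hconv
    hmpec
end

section
/- Under the hypotheses of the multiplier boundedness result (v^t KKT points of NLP_{ε_t} with LICQ, ε_t ↓ 0, v^t → v*, MPEC-LICQ at v*), any accumulation point v* is a C-stationary point of the MPEC: there exist multipliers γ, ν ∈ ℝ^m with ∇f(v*) = Σᵢ γᵢ∇G_i(v*) + Σᵢ νᵢ∇H_i(v*), γᵢ = 0 for i ∈ I_{+0}, νᵢ = 0 for i ∈ I_{0+}, and γᵢνᵢ ≥ 0 for all i ∈ I_{00}. -/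
open Filter

/-!
Feasibility for `NLP_ε` forces `G_i, H_i > 0` with `G_i H_i = ε²/2`, so `G(v*)` and `H(v*)` are
complementary, and the FB weights `(w^G_i, w^H_i)` tend to `(1, 0)` on `I_{0+}` and to `(0, 1)` on
`I_{+0}`. Dividing each KKT term on `I_{0+} ∪ I_{+0}` by its dominant weight writes `∇f(v^t)` as a
combination, with coefficients `λ_i w^G_i` and `λ_i w^H_i`, of vectors converging to the MPEC-LICQ
family. A left inverse of that independent family stays invertible on nearby families, so the
coefficients converge; their limits are `γ, ν`, and on `I_{00}` the product `γ_i ν_i` is a limit of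
`λ_i² w^G_i w^H_i ≥ 0`.
-/

open Topology

section CoefficientLimits

variable {𝕜 : Type*} [NontriviallyNormedField 𝕜] {α : Type*} {l : Filter α}
  {E F : Type*} [NormedAddCommGroup E] [NormedSpace 𝕜 E] [NormedAddCommGroup F] [NormedSpace 𝕜 F]

theorem Filter.Tendsto.clm_apply {A : α → E →L[𝕜] F} {A₀ : E →L[𝕜] F} {y : α → E} {y₀ : E}
    (hA : Tendsto A l (𝓝 A₀)) (hy : Tendsto y l (𝓝 y₀)) :
    Tendsto (fun t => A t (y t)) l (𝓝 (A₀ y₀)) :=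
  (isBoundedBilinearMap_apply.continuous.tendsto (A₀, y₀)).comp (hA.prodMk_nhds hy)

theorem tendsto_of_tendsto_one_of_tendsto_apply [CompleteSpace E] {T : α → E →L[𝕜] E}
    {y : α → E} {z : E} (hT : Tendsto T l (𝓝 1)) (hTy : Tendsto (fun t => T t (y t)) l (𝓝 z)) :
    Tendsto y l (𝓝 z) := by
  have hunit : ∀ᶠ t in l, IsUnit (T t) := hT.eventually (Units.isOpen.mem_nhds isUnit_one)
  have hinv : Tendsto (fun t => Ring.inverse (T t)) l (𝓝 1) := by
    simpa [Function.comp_def] using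
      (NormedRing.inverse_continuousAt (1 : (E →L[𝕜] E)ˣ)).tendsto.comp hT
  have hlim : Tendsto (fun t => Ring.inverse (T t) (T t (y t))) l (𝓝 z) := by
    simpa using hinv.clm_apply hTy
  refine hlim.congr' ?_
  filter_upwards [hunit] with t ht
  rw [← mul_apply_eq_comp, Ring.inverse_mul_cancel _ ht, one_apply_eq_self]

variable {J : Type*} [Fintype J]

noncomputable def linearCombinationCLM (w : J → E) : (J → 𝕜) →L[𝕜] E :=
  ∑ j, (ContinuousLinearMap.proj j : (J → 𝕜) →L[𝕜] 𝕜).smulRight (w j)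

theorem linearCombinationCLM_apply (w : J → E) (κ : J → 𝕜) :
    linearCombinationCLM w κ = ∑ j, κ j • w j := by
  simp [linearCombinationCLM]

theorem continuous_linearCombinationCLM :
    Continuous (linearCombinationCLM : (J → E) → (J → 𝕜) →L[𝕜] E) := by
  unfold linearCombinationCLM
  fun_prop

theorem exists_tendsto_coeffs_of_linearIndependent [CompleteSpace 𝕜] [FiniteDimensional 𝕜 E]
    [l.NeBot] {u : J → E} (hu : LinearIndependent 𝕜 u) {V : α → J → E}
    (hV : ∀ j, Tendsto (V · j) l (𝓝 (u j))) {x : α → E} {x₀ : E} (hx : Tendsto x l (𝓝 x₀))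
    {κ : α → J → 𝕜} (hκ : ∀ t, x t = ∑ j, κ t j • V t j) :
    ∃ c : J → 𝕜, Tendsto κ l (𝓝 c) ∧ x₀ = ∑ j, c j • u j := by
  set A := linearCombinationCLM (𝕜 := 𝕜) u
  have hA : Tendsto (fun t => linearCombinationCLM (𝕜 := 𝕜) (V t)) l (𝓝 A) :=
    (continuous_linearCombinationCLM.tendsto u).comp (tendsto_pi_nhds.mpr hV)
  have hAκ : ∀ t, linearCombinationCLM (V t) (κ t) = x t := fun t => by
    rw [linearCombinationCLM_apply, hκ]
  obtain ⟨L, hL⟩ := LinearMap.exists_leftInverse_of_injective (A : (J → 𝕜) →ₗ[𝕜] E) <| by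
    rw [LinearMap.ker_eq_bot]
    simpa [A, funext (linearCombinationCLM_apply u), ← Fintype.linearCombination_apply]
      using hu.fintypeLinearCombination_injective
  set L' := LinearMap.toContinuousLinearMap L
  have hLA : L'.comp A = 1 := by
    ext1 y; exact LinearMap.congr_fun hL y
  have hT : Tendsto (fun t => L'.comp (linearCombinationCLM (V t))) l (𝓝 1) := by
    rw [← hLA]
    exact ((ContinuousLinearMap.compL 𝕜 (J → 𝕜) E (J → 𝕜) L').continuous.tendsto A).comp hA
  have hκlim : Tendsto κ l (𝓝 (L' x₀)) :=
    tendsto_of_tendsto_one_of_tendsto_apply hT <| by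
      simpa [hAκ, Function.comp_def] using (L'.continuous.tendsto x₀).comp hx
  refine ⟨L' x₀, hκlim, ?_⟩
  rw [← linearCombinationCLM_apply]
  exact tendsto_nhds_unique hx (by simpa [hAκ] using hA.clm_apply hκlim)

end CoefficientLimits

section FBWeight

variable {α : Type*} {l : Filter α}

theorem fbWeight_pos {ε : ℝ} (a b : ℝ) (hε : ε ≠ 0) : 0 < fbWeight ε a b := by
  have hε2 : 0 < ε ^ 2 := by positivity
  rw [fbWeight, sub_pos, div_lt_one (Real.sqrt_pos.mpr (by positivity))]
  exact Real.lt_sqrt_of_sq_lt (by nlinarith [sq_nonneg b])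

theorem fbWeight_zero_zero (b : ℝ) : fbWeight 0 0 b = 1 := by simp [fbWeight]

theorem fbWeight_zero_of_pos {a : ℝ} (ha : 0 < a) : fbWeight 0 a 0 = 0 := by
  simp [fbWeight, Real.sqrt_sq ha.le, ha.ne']

theorem tendsto_fbWeight {e a b : α → ℝ} {A B : ℝ} (he : Tendsto e l (𝓝 0))
    (ha : Tendsto a l (𝓝 A)) (hb : Tendsto b l (𝓝 B)) (hAB : 0 < A ^ 2 + B ^ 2) :
    Tendsto (fun t => fbWeight (e t) (a t) (b t)) l (𝓝 (fbWeight 0 A B)) := by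
  have hrad := ((ha.pow 2).add (hb.pow 2)).add (he.pow 2)
  rw [zero_pow two_ne_zero, add_zero] at hrad
  simpa [fbWeight] using tendsto_const_nhds.sub (ha.div hrad.sqrt (Real.sqrt_pos.mpr hAB).ne')

theorem tendsto_fbWeight_div_fbWeight {e a b : α → ℝ} {B : ℝ} (he : Tendsto e l (𝓝 0))
    (ha : Tendsto a l (𝓝 0)) (hb : Tendsto b l (𝓝 B)) (hB : 0 < B) :
    Tendsto (fun t => fbWeight (e t) (b t) (a t) / fbWeight (e t) (a t) (b t)) l (𝓝 0) := by
  have hB2 : 0 < B ^ 2 := by positivity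
  have hnum := tendsto_fbWeight he hb ha (by simpa using hB2)
  have hden := tendsto_fbWeight he ha hb (by simpa using hB2)
  rw [fbWeight_zero_of_pos hB] at hnum
  rw [fbWeight_zero_zero] at hden
  have := hnum.div hden one_ne_zero
  rwa [zero_div] at this

theorem mul_eq_and_pos_and_pos_of_fb_eq_zero {ε a b : ℝ} (hε : ε ≠ 0)
    (h : a + b - √(a ^ 2 + b ^ 2 + ε ^ 2) = 0) : a * b = ε ^ 2 / 2 ∧ 0 < a ∧ 0 < b := by
  have hsum : a + b = √(a ^ 2 + b ^ 2 + ε ^ 2) := by linarith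
  have hmul : a * b = ε ^ 2 / 2 := by
    have := congrArg (· ^ 2) hsum
    simp only [Real.sq_sqrt (by positivity : (0 : ℝ) ≤ a ^ 2 + b ^ 2 + ε ^ 2)] at this
    linear_combination this / 2
  have hab : 0 < a * b := by rw [hmul]; positivity
  have hsum_pos : 0 < a + b := hsum ▸ Real.sqrt_pos.mpr (by positivity)
  exact ⟨hmul, by nlinarith, by nlinarith⟩

theorem complementary_of_tendsto_of_fb_eq_zero [l.NeBot] {e a b : α → ℝ} {A B : ℝ}
    (he : ∀ t, e t ≠ 0) (he0 : Tendsto e l (𝓝 0)) (ha : Tendsto a l (𝓝 A))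
    (hb : Tendsto b l (𝓝 B))
    (h : ∀ t, a t + b t - √(a t ^ 2 + b t ^ 2 + e t ^ 2) = 0) :
    0 ≤ A ∧ 0 ≤ B ∧ (A = 0 ∨ B = 0) := by
  have hfb := fun t => mul_eq_and_pos_and_pos_of_fb_eq_zero (he t) (h t)
  refine ⟨ge_of_tendsto' ha fun t => (hfb t).2.1.le, ge_of_tendsto' hb fun t => (hfb t).2.2.le,
    mul_eq_zero.mp (tendsto_nhds_unique (ha.mul hb) ?_)⟩
  simpa [fun t => (hfb t).1] using (he0.pow 2).div_const 2

end FBWeight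

section Multipliers

variable {α : Type*} {l : Filter α} {E : Type*} [NormedAddCommGroup E] [NormedSpace ℝ E]
  {ι : Type*} [Fintype ι]

/-- A term active only in `p` (resp. `q`) is charged to `x` (resp. `y`) alone, the other vector
entering with the ratio of the weights. -/
theorem smul_add_smul_eq_ite_add_ite {p q : Prop} [Decidable p] [Decidable q] (hpq : p ∨ q)
    {a b : ℝ} (ha : a ≠ 0) (hb : b ≠ 0) (c : ℝ) (x y : E) :
    c • (a • x + b • y) =
      (if p then (c * a) • (x + (if q then 0 else b / a) • y) else 0) +
      (if q then (c * b) • (y + (if p then 0 else a / b) • x) else 0) := by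
  by_cases hp : p <;> by_cases hq : q <;> simp only [hp, hq, if_true, if_false] <;>
    first | tauto | (match_scalars <;> field_simp <;> ring)

theorem Fintype.sum_dite_zero {M : Type*} [AddCommMonoid M] (p : ι → Prop)
    [DecidablePred p] (f : ∀ i, p i → M) :
    ∑ i, (if h : p i then f i h else 0) = ∑ i : {i // p i}, f i i.2 := by
  rw [← Fintype.sum_subtype_add_sum_subtype p,
    Fintype.sum_congr _ _ fun i : {i // p i} => dif_pos i.2,
    Fintype.sum_congr _ (fun _ => 0) fun i : {i // ¬p i} => dif_neg i.2, Finset.sum_const_zero,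
    add_zero]

theorem Fintype.sum_ite_zero {M : Type*} [AddCommMonoid M] (p : ι → Prop) [DecidablePred p]
    (f : ι → M) : ∑ i, (if p i then f i else 0) = ∑ i : {i // p i}, f i :=
  Fintype.sum_dite_zero p fun i _ => f i

theorem exists_limit_multipliers [FiniteDimensional ℝ E] [l.NeBot] {p q : ι → Prop}
    (hpq : ∀ i, p i ∨ q i) {g h : α → ι → E} {g₀ h₀ : ι → E}
    (hg : ∀ i, Tendsto (g · i) l (𝓝 (g₀ i))) (hh : ∀ i, Tendsto (h · i) l (𝓝 (h₀ i)))
    (hli : LinearIndependent ℝ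
      (Sum.elim (fun i : {i // p i} => g₀ i) (fun i : {i // q i} => h₀ i)))
    {a b : α → ι → ℝ} (ha : ∀ t i, 0 < a t i) (hb : ∀ t i, 0 < b t i)
    (hba : ∀ i, ¬ q i → Tendsto (fun t => b t i / a t i) l (𝓝 0))
    (hab : ∀ i, ¬ p i → Tendsto (fun t => a t i / b t i) l (𝓝 0))
    {x : α → E} {x₀ : E} (hx : Tendsto x l (𝓝 x₀)) {lam : α → ι → ℝ}
    (hrep : ∀ t, x t = ∑ i, lam t i • (a t i • g t i + b t i • h t i)) :
    ∃ γ ν : ι → ℝ, x₀ = ∑ i, γ i • g₀ i + ∑ i, ν i • h₀ i ∧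
      (∀ i, ¬ p i → γ i = 0) ∧ (∀ i, ¬ q i → ν i = 0) ∧ ∀ i, 0 ≤ γ i * ν i := by
  classical
  set rg : α → ι → ℝ := fun t i => if q i then 0 else b t i / a t i
  set rh : α → ι → ℝ := fun t i => if p i then 0 else a t i / b t i
  have hrg : ∀ i, Tendsto (rg · i) l (𝓝 0) := fun i => by
    by_cases hq : q i
    · simp [rg, hq]
    · simpa [rg, hq] using hba i hq
  have hrh : ∀ i, Tendsto (rh · i) l (𝓝 0) := fun i => by
    by_cases hp : p i
    · simp [rh, hp]
    · simpa [rh, hp] using hab i hp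
  set V : α → {i // p i} ⊕ {i // q i} → E := fun t =>
    Sum.elim (fun i => g t i + rg t i • h t i) (fun i => h t i + rh t i • g t i)
  set κ : α → {i // p i} ⊕ {i // q i} → ℝ := fun t =>
    Sum.elim (fun i => lam t i * a t i) (fun i => lam t i * b t i)
  have hV : ∀ j, Tendsto (V · j) l
      (𝓝 (Sum.elim (fun i : {i // p i} => g₀ i) (fun i : {i // q i} => h₀ i) j)) := by
    rintro (⟨i, -⟩ | ⟨i, -⟩)
    · simpa [V] using (hg i).add ((hrg i).smul (hh i))
    · simpa [V] using (hh i).add ((hrh i).smul (hg i))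
  have hκ : ∀ t, x t = ∑ j, κ t j • V t j := fun t => by
    simp_rw [hrep t, fun i => smul_add_smul_eq_ite_add_ite (hpq i) (ha t i).ne' (hb t i).ne'
      (lam t i) (g t i) (h t i), Finset.sum_add_distrib, Fintype.sum_ite_zero, Fintype.sum_sum_type]
    rfl
  obtain ⟨c, hc, hx₀⟩ := exists_tendsto_coeffs_of_linearIndependent hli hV hx hκ
  refine ⟨fun i => if hi : p i then c (.inl ⟨i, hi⟩) else 0,
    fun i => if hi : q i then c (.inr ⟨i, hi⟩) else 0, ?_,
    fun i hi => dif_neg hi, fun i hi => dif_neg hi, fun i => ?_⟩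
  · simp_rw [hx₀, Fintype.sum_sum_type, dite_smul, zero_smul, Fintype.sum_dite_zero]
    rfl
  · by_cases hp : p i
    · by_cases hq : q i
      · simp only [hp, hq, dite_true]
        refine ge_of_tendsto' ((tendsto_pi_nhds.mp hc _).mul (tendsto_pi_nhds.mp hc _)) fun t => ?_
        simpa [κ, mul_mul_mul_comm] using
          mul_nonneg (mul_self_nonneg (lam t i)) (mul_pos (ha t i) (hb t i)).le
      · simp [hq]
    · simp [hp]

end Multipliers

theorem smoothing_c_stationary_general {n m : ℕ}
    (f : (Fin n → ℝ) → ℝ) (G H : (Fin n → ℝ) → Fin m → ℝ)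
    (hf : ContDiff ℝ 1 f)
    (hG : ∀ i, ContDiff ℝ 1 (fun x => G x i))
    (hH : ∀ i, ContDiff ℝ 1 (fun x => H x i))
    (ε : ℕ → ℝ) (hεpos : ∀ t, 0 < ε t)
    (hε0 : Tendsto ε atTop (nhds 0))
    (v : ℕ → Fin n → ℝ) (lam : ℕ → Fin m → ℝ)
    -- feasibility for (NLP_{ε_t})
    (hfeas : ∀ t i, G (v t) i + H (v t) i -
      Real.sqrt ((G (v t) i) ^ 2 + (H (v t) i) ^ 2 + (ε t) ^ 2) = 0)
    -- KKT stationarity of (NLP_{ε_t})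
    (hkkt : ∀ t, fderiv ℝ f (v t) =
      ∑ i : Fin m, lam t i •
        (fbWeight (ε t) (G (v t) i) (H (v t) i) • fderiv ℝ (fun x => G x i) (v t) +
         fbWeight (ε t) (H (v t) i) (G (v t) i) • fderiv ℝ (fun x => H x i) (v t)))
    (vstar : Fin n → ℝ)
    (hconv : Tendsto v atTop (nhds vstar))
    -- MPEC-LICQ at `v*`
    (hmpec : LinearIndependent ℝ (Sum.elim
      (fun i : {i : Fin m // G vstar i = 0} => fderiv ℝ (fun x => G x i.1) vstar)
      (fun i : {i : Fin m // H vstar i = 0} => fderiv ℝ (fun x => H x i.1) vstar))) :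
    ∃ γ ν : Fin m → ℝ,
      fderiv ℝ f vstar =
        (∑ i : Fin m, γ i • fderiv ℝ (fun x => G x i) vstar) +
        (∑ i : Fin m, ν i • fderiv ℝ (fun x => H x i) vstar) ∧
      (∀ i, 0 < G vstar i ∧ H vstar i = 0 → γ i = 0) ∧
      (∀ i, G vstar i = 0 ∧ 0 < H vstar i → ν i = 0) ∧
      (∀ i, G vstar i = 0 ∧ H vstar i = 0 → 0 ≤ γ i * ν i) := by
  have hε : ∀ t, ε t ≠ 0 := fun t => (hεpos t).ne'
  have hlim : ∀ {φ : (Fin n → ℝ) → ℝ}, ContDiff ℝ 1 φ →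
      Tendsto (fun t => φ (v t)) atTop (𝓝 (φ vstar)) ∧
      Tendsto (fun t => fderiv ℝ φ (v t)) atTop (𝓝 (fderiv ℝ φ vstar)) := fun hφ =>
    ⟨(hφ.continuous.tendsto vstar).comp hconv,
      ((hφ.continuous_fderiv one_ne_zero).tendsto vstar).comp hconv⟩
  have hcompl : ∀ i, 0 ≤ G vstar i ∧ 0 ≤ H vstar i ∧ (G vstar i = 0 ∨ H vstar i = 0) := fun i =>
    complementary_of_tendsto_of_fb_eq_zero hε hε0 (hlim (hG i)).1 (hlim (hH i)).1 (hfeas · i)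
  obtain ⟨γ, ν, hsum, hγ, hν, hγν⟩ := exists_limit_multipliers
    (p := fun i => G vstar i = 0) (q := fun i => H vstar i = 0) (fun i => (hcompl i).2.2)
    (fun i => (hlim (hG i)).2) (fun i => (hlim (hH i)).2) hmpec
    (fun t _ => fbWeight_pos _ _ (hε t)) (fun t _ => fbWeight_pos _ _ (hε t))
    (fun i hi => tendsto_fbWeight_div_fbWeight hε0
      (by simpa [(hcompl i).2.2.resolve_right hi] using (hlim (hG i)).1) (hlim (hH i)).1
      ((hcompl i).2.1.lt_of_ne' hi))
    (fun i hi => tendsto_fbWeight_div_fbWeight hε0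
      (by simpa [(hcompl i).2.2.resolve_left hi] using (hlim (hH i)).1) (hlim (hG i)).1
      ((hcompl i).1.lt_of_ne' hi))
    (hlim hf).2 hkkt
  exact ⟨γ, ν, hsum, fun i hi => hγ i hi.1.ne', fun i hi => hν i hi.2.ne', fun i _ => hγν i⟩

/-- Convergence to a C-stationary point: if `v^t` are KKT points of (NLP_{ε_t}) at
which LICQ holds, `ε_t ↓ 0`, `v^t → v*`, and MPEC-LICQ holds at `v*`, then `v*` is
C-stationary for the MPEC: there are multipliers `γ, ν` with
`∇f(v*) = Σᵢ γᵢ ∇G_i(v*) + Σᵢ νᵢ ∇H_i(v*)`, `γᵢ = 0` on `I_{+0}`, `νᵢ = 0` on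
`I_{0+}`, and `γᵢ νᵢ ≥ 0` on `I_{00}`. -/
theorem smoothing_c_stationary {n m : ℕ}
    (f : (Fin n → ℝ) → ℝ) (G H : (Fin n → ℝ) → Fin m → ℝ)
    (hf : ContDiff ℝ 1 f)
    (hG : ∀ i, ContDiff ℝ 1 (fun x => G x i))
    (hH : ∀ i, ContDiff ℝ 1 (fun x => H x i))
    (ε : ℕ → ℝ) (hεpos : ∀ t, 0 < ε t) (hεanti : StrictAnti ε)
    (hε0 : Tendsto ε atTop (nhds 0))
    (v : ℕ → Fin n → ℝ) (lam : ℕ → Fin m → ℝ)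
    -- feasibility for (NLP_{ε_t})
    (hfeas : ∀ t i, G (v t) i + H (v t) i -
      Real.sqrt ((G (v t) i) ^ 2 + (H (v t) i) ^ 2 + (ε t) ^ 2) = 0)
    -- KKT stationarity of (NLP_{ε_t})
    (hkkt : ∀ t, fderiv ℝ f (v t) =
      ∑ i : Fin m, lam t i •
        (fbWeight (ε t) (G (v t) i) (H (v t) i) • fderiv ℝ (fun x => G x i) (v t) +
         fbWeight (ε t) (H (v t) i) (G (v t) i) • fderiv ℝ (fun x => H x i) (v t)))
    -- LICQ at each `v^t`
    (hlicq : ∀ t, LinearIndependent ℝ (fun i : Fin m =>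
      fbWeight (ε t) (G (v t) i) (H (v t) i) • fderiv ℝ (fun x => G x i) (v t) +
      fbWeight (ε t) (H (v t) i) (G (v t) i) • fderiv ℝ (fun x => H x i) (v t)))
    (vstar : Fin n → ℝ)
    (hconv : Tendsto v atTop (nhds vstar))
    -- MPEC-LICQ at `v*`
    (hmpec : LinearIndependent ℝ (Sum.elim
      (fun i : {i : Fin m // G vstar i = 0} => fderiv ℝ (fun x => G x i.1) vstar)
      (fun i : {i : Fin m // H vstar i = 0} => fderiv ℝ (fun x => H x i.1) vstar))) :
    ∃ γ ν : Fin m → ℝ,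
      fderiv ℝ f vstar =
        (∑ i : Fin m, γ i • fderiv ℝ (fun x => G x i) vstar) +
        (∑ i : Fin m, ν i • fderiv ℝ (fun x => H x i) vstar) ∧
      (∀ i, 0 < G vstar i ∧ H vstar i = 0 → γ i = 0) ∧
      (∀ i, G vstar i = 0 ∧ 0 < H vstar i → ν i = 0) ∧
      (∀ i, G vstar i = 0 ∧ H vstar i = 0 → 0 ≤ γ i * ν i) :=
  smoothing_c_stationary_general f G H hf hG hH ε hεpos hε0 v lam hfeas hkkt vstar hconv hmpec
end
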